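/- There exists a constant C > 0 such that for every C¹ function v : ℝ² → ℝ with v ∈ L²(ℝ²) ∩ L⁴(ℝ²), |∇v| ∈ L²(ℝ²), and satisfying ∫_{ℝ²} v⁴ dx ≤ 2·(∫_{ℝ²} v² dx)·(∫_{ℝ²} |∇v|² dx), one has (∫_{ℝ²} v² dx)^{1/2} ≤ C·(1 + ∫_{ℝ²} v²/(1+|v|)² dx + ∫_{ℝ²} |∇v|² dx). -/

import Mathlib

/-!
Split `v² = (v / (1 + |v|)) · (v (1 + |v|))` and apply Cauchy–Schwarz. Since
`(v (1 + |v|))² ≤ 2v² + 2v⁴`, the interpolation hypothesis gives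
`(∫v²)² ≤ (∫ v²/(1+|v|)²) · (∫v²) · (2 + 4∫|∇v|²)`; dividing by `∫v²` and using
`√(xy) ≤ (x + y)/2` yields the bound with `C = 2`.
-/

open MeasureTheory

theorem Real.sqrt_le_add_div_two_of_sq_le_mul {a b c : ℝ} (ha : 0 ≤ a) (hb : 0 ≤ b) (hc : 0 ≤ c)
    (h : b ^ 2 ≤ a * (b * c)) : √b ≤ (a + c) / 2 := by
  have hb' : b ≤ a * c := by
    rcases hb.eq_or_lt with rfl | hb
    · positivity
    · nlinarith
  rw [Real.sqrt_le_left (by positivity)]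
  nlinarith [sq_nonneg (a - c)]

theorem sq_mul_one_add_abs_le (x : ℝ) : (x * (1 + |x|)) ^ 2 ≤ 2 * x ^ 2 + 2 * x ^ 4 := by
  have h4 : x ^ 4 = (|x| ^ 2) ^ 2 := by rw [sq_abs]; ring
  rw [h4, mul_pow, ← sq_abs x]
  nlinarith [sq_nonneg (|x| - |x| ^ 2)]

section

variable {α : Type*} [MeasurableSpace α] {μ : Measure α}

theorem MeasureTheory.MemLp.integrable_pow_four {v : α → ℝ} (hv : MemLp v 4 μ) :
    Integrable (fun a => v a ^ 4) μ :=
  (hv.integrable_norm_pow (p := 4) (by norm_num)).congr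
    (ae_of_all _ fun a => by simp [(by decide : Even 4).pow_abs])

theorem sq_integral_mul_le_integral_sq_mul_integral_sq {f g : α → ℝ} (hf : MemLp f 2 μ)
    (hg : MemLp g 2 μ) :
    (∫ a, f a * g a ∂μ) ^ 2 ≤ (∫ a, f a ^ 2 ∂μ) * ∫ a, g a ^ 2 ∂μ := by
  have inner_toLp {u w : α → ℝ} (hu : MemLp u 2 μ) (hw : MemLp w 2 μ) :
      inner ℝ hu.toLp hw.toLp = ∫ a, u a * w a ∂μ := by
    rw [L2.inner_def]
    refine integral_congr_ae ?_
    filter_upwards [hu.coeFn_toLp, hw.coeFn_toLp] with a hua hwa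
    simp [hua, hwa, mul_comm]
  simpa only [inner_toLp, sq] using real_inner_mul_inner_self_le hf.toLp hg.toLp

theorem sq_integral_sq_le_integral_sq_div_one_add_abs_sq_mul {v : α → ℝ} (hv2 : MemLp v 2 μ)
    (hv4 : MemLp v 4 μ) :
    (∫ a, v a ^ 2 ∂μ) ^ 2 ≤
      (∫ a, v a ^ 2 / (1 + |v a|) ^ 2 ∂μ) * (2 * ∫ a, v a ^ 2 ∂μ + 2 * ∫ a, v a ^ 4 ∂μ) := by
  set f := fun a => v a / (1 + |v a|)
  set g := fun a => v a * (1 + |v a|)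
  have hv := hv2.aestronglyMeasurable.aemeasurable
  have hf : MemLp f 2 μ := by
    refine hv2.of_le (by fun_prop) (ae_of_all _ fun a => ?_)
    rw [Real.norm_eq_abs, Real.norm_eq_abs, abs_div, abs_of_pos (by positivity : 0 < 1 + |v a|)]
    exact div_le_self (abs_nonneg _) (by simp)
  have hdom : Integrable (fun a => 2 * v a ^ 2 + 2 * v a ^ 4) μ :=
    (hv2.integrable_sq.const_mul 2).add (hv4.integrable_pow_four.const_mul 2)
  have hg : MemLp g 2 μ := by
    refine (memLp_two_iff_integrable_sq (by fun_prop)).2 (hdom.mono' (by fun_prop) ?_)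
    exact ae_of_all _ fun a => by simpa using sq_mul_one_add_abs_le (v a)
  have hfg : ∀ a, f a * g a = v a ^ 2 := fun a => by
    have : 1 + |v a| ≠ 0 := by positivity
    simp only [f, g]
    field_simp
  have hf_sq : ∀ a, f a ^ 2 = v a ^ 2 / (1 + |v a|) ^ 2 := fun a => div_pow _ _ _
  calc (∫ a, v a ^ 2 ∂μ) ^ 2 = (∫ a, f a * g a ∂μ) ^ 2 := by simp only [hfg]
    _ ≤ (∫ a, f a ^ 2 ∂μ) * ∫ a, g a ^ 2 ∂μ :=
      sq_integral_mul_le_integral_sq_mul_integral_sq hf hg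
    _ ≤ (∫ a, v a ^ 2 / (1 + |v a|) ^ 2 ∂μ) * ∫ a, 2 * v a ^ 2 + 2 * v a ^ 4 ∂μ := by
      simp only [hf_sq]
      exact mul_le_mul_of_nonneg_left
        (integral_mono hg.integrable_sq hdom fun a => sq_mul_one_add_abs_le (v a))
        (integral_nonneg fun a => by positivity)
    _ = _ := by
      rw [integral_add (hv2.integrable_sq.const_mul 2) (hv4.integrable_pow_four.const_mul 2),
        integral_const_mul, integral_const_mul]

end

/-- inequality (eq18) of the paper. There is a constant `C > 0` such
that for every `C¹` function `v : ℝ² → ℝ` with `v ∈ L² ∩ L⁴`, `|∇v| ∈ L²`, and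
`∫v⁴ ≤ 2(∫v²)(∫|∇v|²)`, one has
`(∫v²)^{1/2} ≤ C·(1 + ∫ v²/(1+|v|)² + ∫|∇v|²)`. -/
theorem L2_norm_coercivity_bound :
    ∃ C > (0 : ℝ),
      ∀ v : EuclideanSpace ℝ (Fin 2) → ℝ,
        ContDiff ℝ 1 v →
        MemLp v 2 volume → MemLp v 4 volume →
        MemLp (fun x => ‖fderiv ℝ v x‖) 2 volume →
        (∫ x, (v x) ^ 4) ≤ 2 * (∫ x, (v x) ^ 2) * (∫ x, ‖fderiv ℝ v x‖ ^ 2) →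
        Real.sqrt (∫ x, (v x) ^ 2) ≤
          C * (1 + (∫ x, (v x) ^ 2 / (1 + |v x|) ^ 2) + ∫ x, ‖fderiv ℝ v x‖ ^ 2) := by
  refine ⟨2, two_pos, fun v _ hv2 hv4 _ hinterp => ?_⟩
  set A := ∫ x, (v x) ^ 2 / (1 + |v x|) ^ 2
  set B := ∫ x, (v x) ^ 2
  set D := ∫ x, ‖fderiv ℝ v x‖ ^ 2
  have hA : 0 ≤ A := integral_nonneg fun x => by positivity
  have hB : 0 ≤ B := integral_nonneg fun x => by positivity
  have hD : 0 ≤ D := integral_nonneg fun x => by positivity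
  have hB_sq : B ^ 2 ≤ A * (B * (2 + 4 * D)) :=
    (sq_integral_sq_le_integral_sq_div_one_add_abs_sq_mul hv2 hv4).trans
      (mul_le_mul_of_nonneg_left (by linarith) hA)
  have := Real.sqrt_le_add_div_two_of_sq_le_mul hA hB (by positivity) hB_sq
  linarith
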